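/- For every real number a and every ρ ∈ [−1,1], the random variable Y := a·U + V⁵ − 10·V³ + 15·V satisfies κ₄(Y) = E[Y⁴] − 3·E[Y²]² > 0. In particular, no choice of a and ρ makes the fourth cumulant of a·H₁(U) + H₅(V) vanish, where H₁(x) = x and H₅(x) = x⁵ − 10x³ + 15x are the first and fifth (probabilists') Hermite polynomials. -/

import Mathlib

open MeasureTheory ProbabilityTheory Real Finset
open scoped ENNReal NNReal Nat

/-!
Put `s = √(1 - ρ²)`. The pair `V = ρU + sW`, `W' = sU - ρW` is jointly Gaussian and uncorrelated,
hence again a pair of independent standard Gaussians, and `U = ρV + sW'`. So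
`Y = g(V) + as·W'` with `g = H₅ + aρ·H₁` odd. The fourth cumulant is additive over independent
centred summands and vanishes on Gaussians, so `κ₄(Y) = κ₄(g(V))`, which the Gaussian moments
`E[V^(2k)] = (2k-1)‼` turn into `7200 (aρ + 60)² + 41040000 > 0`.
-/

lemma MeasureTheory.MemLp.integrable_pow_of_le {Ω : Type*} [MeasurableSpace Ω] {μ : Measure Ω}
    [IsFiniteMeasure μ] {X : Ω → ℝ} {p i : ℕ} (hX : MemLp X p μ) (hi : i ≤ p) :
    Integrable (fun ω ↦ X ω ^ i) μ :=
  (hX.mono_exponent (by exact_mod_cast hi)).integrable_norm_pow'.mono' (hX.1.pow i)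
    (ae_of_all _ fun ω ↦ by simp [norm_pow])

lemma integrable_pow_mul_exp_neg_sq_div_two (n : ℕ) :
    Integrable (fun x : ℝ ↦ x ^ n * rexp (-x ^ 2 / 2)) := by
  have h := integrable_rpow_mul_exp_neg_mul_sq (b := 1 / 2) (by norm_num) (s := n)
    (by linarith [n.cast_nonneg (α := ℝ)])
  refine h.congr (ae_of_all _ fun x ↦ ?_)
  simp only [rpow_natCast]
  ring_nf

lemma integral_pow_add_two_mul_exp_neg_sq_div_two (n : ℕ) :
    ∫ x, x ^ (n + 2) * rexp (-x ^ 2 / 2) = (n + 1) * ∫ x, x ^ n * rexp (-x ^ 2 / 2) := by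
  have hderiv (x : ℝ) : HasDerivAt (fun x ↦ x ^ (n + 1) * rexp (-x ^ 2 / 2))
      ((n + 1) * (x ^ n * rexp (-x ^ 2 / 2)) - x ^ (n + 2) * rexp (-x ^ 2 / 2)) x := by
    have hexp : HasDerivAt (fun x : ℝ ↦ -x ^ 2 / 2) (-x) x :=
      ((hasDerivAt_pow 2 x).neg.div_const 2).congr_deriv (by push_cast; ring)
    refine ((hasDerivAt_pow (n + 1) x).fun_mul hexp.exp).congr_deriv ?_
    push_cast
    ring
  have hint := integrable_pow_mul_exp_neg_sq_div_two
  have h := integral_eq_zero_of_hasDerivAt_of_integrable hderiv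
    (((hint n).const_mul _).sub (hint (n + 2))) (hint (n + 1))
  rw [integral_sub ((hint n).const_mul _) (hint (n + 2)), integral_const_mul] at h
  linarith

namespace ProbabilityTheory

variable {Ω : Type*} [MeasurableSpace Ω] {μ : Measure Ω}

lemma memLp_pow_gaussianReal (m : ℝ) (v : ℝ≥0) (n : ℕ) {p : ℝ≥0∞} (hp : p ≠ ∞) :
    MemLp (fun x : ℝ ↦ x ^ n) p (gaussianReal m v) := by
  rcases n.eq_zero_or_pos with rfl | hn
  · simp_rw [pow_zero]; exact memLp_const 1
  have h := (memLp_id_gaussianReal' (μ := m) (v := v) (p * n)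
    (ENNReal.mul_ne_top hp (by simp))).norm_rpow_div n
  rw [ENNReal.mul_div_cancel_right (by exact_mod_cast hn.ne') (by simp)] at h
  refine (memLp_norm_iff (by fun_prop)).1 ?_
  simpa [norm_pow] using h

lemma integrable_pow_gaussianReal (m : ℝ) (v : ℝ≥0) (n : ℕ) :
    Integrable (fun x : ℝ ↦ x ^ n) (gaussianReal m v) :=
  memLp_one_iff_integrable.1 (memLp_pow_gaussianReal m v n ENNReal.one_ne_top)

lemma integral_eq_zero_of_odd_gaussianReal (v : ℝ≥0) {f : ℝ → ℝ} (hf : ∀ x, f (-x) = -f x) :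
    ∫ x, f x ∂gaussianReal 0 v = 0 := by
  have h : ∫ x, f x ∂gaussianReal 0 v = ∫ x, f (-x) ∂gaussianReal 0 v := by
    conv_lhs => rw [← neg_zero, ← gaussianReal_map_neg]
    exact integral_map_equiv (MeasurableEquiv.neg ℝ) f
  simp only [hf, integral_neg] at h
  linarith

lemma integral_gaussianReal_zero_one (f : ℝ → ℝ) :
    ∫ x, f x ∂gaussianReal 0 1 = (√(2 * π))⁻¹ * ∫ x, f x * rexp (-x ^ 2 / 2) := by
  rw [integral_gaussianReal_eq_integral_smul one_ne_zero, ← integral_const_mul]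
  congr with x
  simp only [gaussianPDFReal, NNReal.coe_one, mul_one, sub_zero, smul_eq_mul]
  ring

lemma integral_pow_add_two_gaussianReal (n : ℕ) :
    ∫ x, x ^ (n + 2) ∂gaussianReal 0 1 = (n + 1) * ∫ x, x ^ n ∂gaussianReal 0 1 := by
  simp only [integral_gaussianReal_zero_one, integral_pow_add_two_mul_exp_neg_sq_div_two]
  ring

lemma integral_pow_two_mul_gaussianReal (k : ℕ) :
    ∫ x, x ^ (2 * k) ∂gaussianReal 0 1 = ((2 * k - 1)‼ : ℕ) := by
  induction k with
  | zero => simp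
  | succ k ih =>
    rw [show 2 * (k + 1) = 2 * k + 2 by ring, integral_pow_add_two_gaussianReal, ih]
    rcases k with _ | k
    · simp
    · rw [show 2 * (k + 1) + 2 - 1 = (2 * k + 1) + 2 by omega, Nat.doubleFactorial_add_two,
        show 2 * (k + 1) - 1 = 2 * k + 1 by omega]
      push_cast; ring

lemma integral_sum_mul_pow_two_mul_gaussianReal {N : ℕ} (a : Fin N → ℝ) :
    ∫ x, ∑ k, a k * x ^ (2 * (k : ℕ)) ∂gaussianReal 0 1 = ∑ k, a k * ((2 * k - 1)‼ : ℕ) := by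
  rw [integral_finsetSum _ fun k _ ↦ (integrable_pow_gaussianReal 0 1 _).const_mul _]
  simp only [integral_const_mul, integral_pow_two_mul_gaussianReal]

/-- This is the fourth cumulant only for centred `X`. -/
noncomputable def fourthCumulant (X : Ω → ℝ) (μ : Measure Ω) : ℝ :=
  ∫ ω, X ω ^ 4 ∂μ - 3 * (∫ ω, X ω ^ 2 ∂μ) ^ 2

lemma fourthCumulant_const_mul (c : ℝ) (X : Ω → ℝ) :
    fourthCumulant (fun ω ↦ c * X ω) μ = c ^ 4 * fourthCumulant X μ := by
  simp only [fourthCumulant, mul_pow, integral_const_mul]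
  ring

lemma HasLaw.memLp_comp {Ω' : Type*} [MeasurableSpace Ω'] {ν : Measure Ω'} {V : Ω → Ω'}
    {g : Ω' → ℝ} {p : ℝ≥0∞} (hV : HasLaw V ν μ) (hg : MemLp g p ν) :
    MemLp (fun ω ↦ g (V ω)) p μ := by
  rw [← hV.map_eq] at hg
  exact hg.comp_of_map hV.aemeasurable

lemma HasLaw.fourthCumulant_comp {Ω' : Type*} [MeasurableSpace Ω'] {ν : Measure Ω'} {V : Ω → Ω'}
    {g : Ω' → ℝ} (hV : HasLaw V ν μ) (hg : AEStronglyMeasurable g ν) :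
    fourthCumulant (fun ω ↦ g (V ω)) μ = fourthCumulant g ν := by
  simp only [fourthCumulant]
  rw [← hV.integral_comp (f := fun x ↦ g x ^ 4) (hg.pow 4),
    ← hV.integral_comp (f := fun x ↦ g x ^ 2) (hg.pow 2)]
  rfl

lemma fourthCumulant_id_gaussianReal : fourthCumulant (fun x ↦ x) (gaussianReal 0 1) = 0 := by
  have h4 := integral_pow_two_mul_gaussianReal 2
  have h2 := integral_pow_two_mul_gaussianReal 1
  norm_num [Nat.doubleFactorial] at h4 h2
  simp [fourthCumulant, h4, h2]

lemma IndepFun.integral_add_pow {X Z : Ω → ℝ} (hXZ : IndepFun X Z μ) (hX : AEMeasurable X μ)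
    (hZ : AEMeasurable Z μ) {n : ℕ}
    (hint : ∀ i ≤ n, Integrable (fun ω ↦ X ω ^ i * Z ω ^ (n - i)) μ) :
    ∫ ω, (X ω + Z ω) ^ n ∂μ
      = ∑ i ∈ range (n + 1), (∫ ω, X ω ^ i ∂μ) * (∫ ω, Z ω ^ (n - i) ∂μ) * n.choose i := by
  simp_rw [add_pow]
  rw [integral_finsetSum _ fun i hi ↦ ((hint i (mem_range_succ_iff.1 hi)).mul_const _)]
  refine sum_congr rfl fun i _ ↦ ?_
  rw [integral_mul_const]
  congr 1
  exact (hXZ.comp (measurable_id.pow_const i) (measurable_id.pow_const (n - i)))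
    |>.integral_fun_mul_eq_mul_integral (hX.pow_const i).aestronglyMeasurable
      (hZ.pow_const (n - i)).aestronglyMeasurable

lemma IndepFun.fourthCumulant_add [IsProbabilityMeasure μ] {X Z : Ω → ℝ} (hXZ : IndepFun X Z μ)
    (hX : MemLp X 4 μ) (hZ : MemLp Z 4 μ) (hX₀ : ∫ ω, X ω ∂μ = 0) (hZ₀ : ∫ ω, Z ω ∂μ = 0) :
    fourthCumulant (fun ω ↦ X ω + Z ω) μ = fourthCumulant X μ + fourthCumulant Z μ := by
  have hint {n : ℕ} (hn : n ≤ 4) (i : ℕ) (hi : i ≤ n) :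
      Integrable (fun ω ↦ X ω ^ i * Z ω ^ (n - i)) μ :=
    (hXZ.comp (measurable_id.pow_const i) (measurable_id.pow_const (n - i))).integrable_mul
      (hX.integrable_pow_of_le (p := 4) (by omega)) (hZ.integrable_pow_of_le (p := 4) (by omega))
  have hX' := hX.1.aemeasurable
  have hZ' := hZ.1.aemeasurable
  simp only [fourthCumulant, hXZ.integral_add_pow hX' hZ' (hint le_rfl),
    hXZ.integral_add_pow hX' hZ' (hint (n := 2) (by norm_num)), sum_range_succ,
    sum_range_zero]
  norm_num [Nat.choose, hX₀, hZ₀]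
  ring

lemma memLp_hermite_five_add_mul (c : ℝ) {p : ℝ≥0∞} (hp : p ≠ ∞) :
    MemLp (fun x ↦ x ^ 5 - 10 * x ^ 3 + 15 * x + c * x) p (gaussianReal 0 1) := by
  have h (n : ℕ) := memLp_pow_gaussianReal 0 1 n hp
  have hid : MemLp (fun x : ℝ ↦ x) p (gaussianReal 0 1) := memLp_id_gaussianReal' p hp
  exact (((h 5).sub ((h 3).const_mul 10)).add (hid.const_mul 15)).add (hid.const_mul c)

lemma fourthCumulant_hermite_five_add_mul (c : ℝ) :
    fourthCumulant (fun x ↦ x ^ 5 - 10 * x ^ 3 + 15 * x + c * x) (gaussianReal 0 1)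
      = 7200 * (c + 60) ^ 2 + 41040000 := by
  set d := 15 + c
  have h2 (x : ℝ) : (x ^ 5 - 10 * x ^ 3 + 15 * x + c * x) ^ 2
      = ∑ k : Fin 6, ![0, d ^ 2, -20 * d, 100 + 2 * d, -20, 1] k * x ^ (2 * (k : ℕ)) := by
    simp only [Fin.sum_univ_succ, Fin.sum_univ_zero, Matrix.cons_val_zero, Matrix.cons_val_succ,
      Fin.val_zero, Fin.val_succ, d]
    ring
  have h4 (x : ℝ) : (x ^ 5 - 10 * x ^ 3 + 15 * x + c * x) ^ 4
      = ∑ k : Fin 11, ![0, 0, d ^ 4, -40 * d ^ 3, 4 * d ^ 3 + 600 * d ^ 2,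
          -120 * d ^ 2 - 4000 * d, 6 * d ^ 2 + 1200 * d + 10000, -4000 - 120 * d, 600 + 4 * d,
          -40, 1] k * x ^ (2 * (k : ℕ)) := by
    simp only [Fin.sum_univ_succ, Fin.sum_univ_zero, Matrix.cons_val_zero, Matrix.cons_val_succ,
      Fin.val_zero, Fin.val_succ, d]
    ring
  simp only [fourthCumulant, h2, h4, integral_sum_mul_pow_two_mul_gaussianReal]
  simp only [Fin.sum_univ_succ, Fin.sum_univ_zero, Matrix.cons_val_zero, Matrix.cons_val_succ,
    Fin.val_zero, Fin.val_succ]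
  norm_num [Nat.doubleFactorial, d]
  ring

section Rotation

variable {U W : Ω → ℝ}

lemma IndepFun.hasLaw_mul_add_mul_gaussianReal (hUW : IndepFun U W μ)
    (hU : HasLaw U (gaussianReal 0 1) μ) (hW : HasLaw W (gaussianReal 0 1) μ) {c s : ℝ}
    (hcs : c ^ 2 + s ^ 2 = 1) : HasLaw (fun ω ↦ c * U ω + s * W ω) (gaussianReal 0 1) μ := by
  refine ⟨by fun_prop, ?_⟩
  have h := gaussianReal_add_gaussianReal_of_indepFun
    (hUW.comp (measurable_const_mul c) (measurable_const_mul s))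
    (gaussianReal_const_mul hU c).map_eq (gaussianReal_const_mul hW s).map_eq
  convert h using 2
  · rfl
  · simp
  · apply NNReal.eq
    simp [hcs]

lemma IndepFun.indepFun_mul_add_mul_mul_sub_mul (hUW : IndepFun U W μ)
    (hU : HasLaw U (gaussianReal 0 1) μ) (hW : HasLaw W (gaussianReal 0 1) μ) (c s : ℝ) :
    IndepFun (fun ω ↦ c * U ω + s * W ω) (fun ω ↦ s * U ω - c * W ω) μ := by
  have := hU.isProbabilityMeasure
  have hUG : HasGaussianLaw U μ := hU.hasGaussianLaw
  have hWG : HasGaussianLaw W μ := hW.hasGaussianLaw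
  have hU2 := hUG.memLp_two
  have hW2 := hWG.memLp_two
  let L : ℝ × ℝ →L[ℝ] ℝ × ℝ :=
    (c • ContinuousLinearMap.fst ℝ ℝ ℝ + s • ContinuousLinearMap.snd ℝ ℝ ℝ).prod
      (s • ContinuousLinearMap.fst ℝ ℝ ℝ - c • ContinuousLinearMap.snd ℝ ℝ ℝ)
  have hG : HasGaussianLaw (fun ω ↦ (c * U ω + s * W ω, s * U ω - c * W ω)) μ :=
    (hUW.hasGaussianLaw hUG hWG).map_fun L
  refine hG.indepFun_of_covariance_eq_zero ?_
  have hVarU : Var[U; μ] = 1 := by simp [hU.variance_eq]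
  have hVarW : Var[W; μ] = 1 := by simp [hW.variance_eq]
  show cov[(fun ω ↦ c * U ω) + (fun ω ↦ s * W ω), (fun ω ↦ s * U ω) - (fun ω ↦ c * W ω); μ] = 0
  rw [covariance_add_left (hU2.const_mul c) (hW2.const_mul s)
      ((hU2.const_mul s).sub (hW2.const_mul c)),
    covariance_sub_right (hU2.const_mul c) (hU2.const_mul s) (hW2.const_mul c),
    covariance_sub_right (hW2.const_mul s) (hU2.const_mul s) (hW2.const_mul c)]
  simp only [covariance_const_mul_left, covariance_const_mul_right,
    covariance_self hU.aemeasurable, covariance_self hW.aemeasurable, hVarU, hVarW,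
    hUW.covariance_eq_zero hU2 hW2, hUW.symm.covariance_eq_zero hW2 hU2]
  ring

end Rotation

lemma IndepFun.fourthCumulant_comp_add_const_mul {V W : Ω → ℝ} (hVW : IndepFun V W μ)
    (hV : HasLaw V (gaussianReal 0 1) μ) (hW : HasLaw W (gaussianReal 0 1) μ) {g : ℝ → ℝ}
    (hg : MemLp g 4 (gaussianReal 0 1)) (hg_odd : ∀ x, g (-x) = -g x) (b : ℝ) :
    fourthCumulant (fun ω ↦ g (V ω) + b * W ω) μ = fourthCumulant g (gaussianReal 0 1) := by
  have := hV.isProbabilityMeasure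
  have hb : MemLp (fun x : ℝ ↦ b * x) 4 (gaussianReal 0 1) :=
    (memLp_id_gaussianReal' 4 (by norm_num)).const_mul b
  have hind : IndepFun (fun ω ↦ g (V ω)) (fun ω ↦ b * W ω) μ :=
    hVW.comp₀ hV.aemeasurable hW.aemeasurable (hV.map_eq ▸ hg.1.aemeasurable)
      (measurable_const_mul b).aemeasurable
  rw [hind.fourthCumulant_add (hV.memLp_comp hg) (hW.memLp_comp hb) ?_ ?_,
    hV.fourthCumulant_comp hg.1, hW.fourthCumulant_comp hb.1, fourthCumulant_const_mul,
    fourthCumulant_id_gaussianReal, mul_zero, add_zero]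
  · exact (hV.integral_comp hg.1).trans (integral_eq_zero_of_odd_gaussianReal 1 hg_odd)
  · rw [integral_const_mul, hW.integral_eq, integral_id_gaussianReal, mul_zero]

end ProbabilityTheory

theorem stmt_13_general
    {Ω : Type*} [MeasurableSpace Ω] (μ : Measure Ω)
    (U W : Ω → ℝ)
    (hUW : IndepFun U W μ)
    (hU : Measure.map U μ = gaussianReal 0 1)
    (hW : Measure.map W μ = gaussianReal 0 1)
    (ρ : ℝ) (hρ : ρ ∈ Set.Icc (-1 : ℝ) 1)
    (V : Ω → ℝ) (hV : ∀ ω, V ω = ρ * U ω + Real.sqrt (1 - ρ ^ 2) * W ω)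
    (a : ℝ) (Y : Ω → ℝ) (hY : ∀ ω, Y ω = a * U ω + (V ω) ^ 5 - 10 * (V ω) ^ 3 + 15 * V ω) :
    (∫ ω, (Y ω) ^ 4 ∂μ) - 3 * (∫ ω, (Y ω) ^ 2 ∂μ) ^ 2 > 0 := by
  obtain ⟨hρ₁, hρ₂⟩ := hρ
  set s := √(1 - ρ ^ 2)
  have hs : ρ ^ 2 + s ^ 2 = 1 := by
    rw [sq_sqrt (by nlinarith)]
    ring
  have hUlaw : HasLaw U (gaussianReal 0 1) μ := ⟨.of_map_ne_zero (by simp [hU, NeZero.ne]), hU⟩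
  have hWlaw : HasLaw W (gaussianReal 0 1) μ := ⟨.of_map_ne_zero (by simp [hW, NeZero.ne]), hW⟩
  have hVlaw : HasLaw V (gaussianReal 0 1) μ := by
    simpa [← funext hV] using hUW.hasLaw_mul_add_mul_gaussianReal hUlaw hWlaw hs
  have hW'law : HasLaw (fun ω ↦ s * U ω - ρ * W ω) (gaussianReal 0 1) μ := by
    simpa [sub_eq_add_neg] using
      hUW.hasLaw_mul_add_mul_gaussianReal hUlaw hWlaw (c := s) (s := -ρ) (by linarith)
  have hind : IndepFun V (fun ω ↦ s * U ω - ρ * W ω) μ := by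
    simpa [← funext hV] using hUW.indepFun_mul_add_mul_mul_sub_mul hUlaw hWlaw ρ s
  have hY' : Y = fun ω ↦ (V ω ^ 5 - 10 * V ω ^ 3 + 15 * V ω + a * ρ * V ω)
      + a * s * (s * U ω - ρ * W ω) := by
    funext ω
    rw [hY, hV]
    linear_combination (-a * U ω) * hs
  have hκ : fourthCumulant Y μ = 7200 * (a * ρ + 60) ^ 2 + 41040000 := by
    rw [hY', hind.fourthCumulant_comp_add_const_mul hVlaw hW'law
      (memLp_hermite_five_add_mul _ (by norm_num)) (fun x ↦ by ring),
      fourthCumulant_hermite_five_add_mul]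
  show 0 < fourthCumulant Y μ
  rw [hκ]
  positivity

theorem stmt_13
    {Ω : Type*} [MeasurableSpace Ω] (μ : Measure Ω) [IsProbabilityMeasure μ]
    (U W : Ω → ℝ) (hUm : Measurable U) (hWm : Measurable W)
    (hUW : IndepFun U W μ)
    (hU : Measure.map U μ = gaussianReal 0 1)
    (hW : Measure.map W μ = gaussianReal 0 1)
    (ρ : ℝ) (hρ : ρ ∈ Set.Icc (-1 : ℝ) 1)
    (V : Ω → ℝ) (hV : ∀ ω, V ω = ρ * U ω + Real.sqrt (1 - ρ ^ 2) * W ω)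
    (a : ℝ) (Y : Ω → ℝ) (hY : ∀ ω, Y ω = a * U ω + (V ω) ^ 5 - 10 * (V ω) ^ 3 + 15 * V ω) :
    (∫ ω, (Y ω) ^ 4 ∂μ) - 3 * (∫ ω, (Y ω) ^ 2 ∂μ) ^ 2 > 0 :=
  stmt_13_general μ U W hUW hU hW ρ hρ V hV a Y hY
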